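/- arXiv:1912.12802 — 3 statements merged into one kernel-verified Lean document; each statement's English description precedes it below -/
import Mathlib

section
/- The potential function Ψ is an exact potential for the route selection game: for every strategy profile s, every player m, and every alternative strategy s'_m ∈ S_m, Ψ(s'_m, s_{−m}) − Ψ(s) = Ũ_m(s'_m, s_{−m}) − Ũ_m(s). (Theorem 1, core claim.) -/
/-!
Rosenthal's argument. Splitting off player `m`, the congestion is
`z_v(s) = z_v(s_{−m}) + [v ∈ Vert(s_m)]`, so on the vertices `m` uses the reward `ϱ_v(z_v(s))`
is exactly the top term of the inner sum `Σ_{q ≤ z_v(s)} ϱ_v(q)` of `Ψ`. Hence `Ψ(s) − Ũ_m(s)`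
is the potential of the game with player `m` removed, which does not depend on `s_m`.
-/

open Finset

variable {ι V : Type*} [Fintype ι] [Nonempty ι] [DecidableEq ι] [Fintype V] [DecidableEq V]
variable {S : ι → Type*} [∀ m, Fintype (S m)] [∀ m, Nonempty (S m)]

/-- The congestion `z_v(s)`: the number of players whose strategy uses vertex `v`. -/
def congestion (Vert : ∀ m : ι, S m → Finset V) (s : ∀ n, S n) (v : V) : ℕ :=
  (Finset.univ.filter fun n => v ∈ Vert n (s n)).card

/-- The reward part `Ũ^V_m(s)` of player `m`'s payoff. -/
def payoffV (Vert : ∀ m : ι, S m → Finset V) (ϱ : V → ℕ → ℝ) (m : ι) (s : ∀ n, S n) : ℝ :=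
  ∑ v ∈ Vert m (s m), ϱ v (congestion Vert s v)

/-- Player `m`'s payoff `Ũ_m(s) = Σ_{v ∈ Vert(s_m)} ϱ_v(z_v(s)) − c_m(s_m)`. -/
def payoff (Vert : ∀ m : ι, S m → Finset V) (ϱ : V → ℕ → ℝ) (c : ∀ m : ι, S m → ℝ)
    (m : ι) (s : ∀ n, S n) : ℝ :=
  payoffV Vert ϱ m s - c m (s m)

/-- The vertex part `Ψ^V(s) = Σ_{v ∈ V} Σ_{q=1}^{z_v(s)} ϱ_v(q)` of the potential. -/
def potentialV (Vert : ∀ m : ι, S m → Finset V) (ϱ : V → ℕ → ℝ) (s : ∀ n, S n) : ℝ :=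
  ∑ v : V, ∑ q ∈ Finset.Icc 1 (congestion Vert s v), ϱ v q

/-- The potential `Ψ(s) = Σ_{v ∈ V} Σ_{q=1}^{z_v(s)} ϱ_v(q) − Σ_{n∈ι} c_n(s_n)`. -/
def potential (Vert : ∀ m : ι, S m → Finset V) (ϱ : V → ℕ → ℝ) (c : ∀ m : ι, S m → ℝ)
    (s : ∀ n, S n) : ℝ :=
  potentialV Vert ϱ s - ∑ n : ι, c n (s n)

theorem Finset.card_filter_eq_card_filter_erase_add_ite {α : Type*} [DecidableEq α]
    (p : α → Prop) [DecidablePred p] {s : Finset α} {a : α} (ha : a ∈ s) :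
    #{x ∈ s | p x} = #{x ∈ s.erase a | p x} + if p a then 1 else 0 := by
  simp only [card_filter]
  exact (sum_erase_add s _ ha).symm

theorem Finset.sum_Icc_one_add_ite {M : Type*} [AddCommMonoid M] (f : ℕ → M) (k : ℕ)
    (p : Prop) [Decidable p] :
    ∑ q ∈ Icc 1 (k + if p then 1 else 0), f q =
      ∑ q ∈ Icc 1 k, f q + if p then f (k + 1) else 0 := by
  split_ifs
  · exact sum_Icc_succ_top (by omega) f
  · simp

section WithoutPlayer

omit [Nonempty ι] [∀ m, Fintype (S m)] [∀ m, Nonempty (S m)]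

def congestionWithout (Vert : ∀ m : ι, S m → Finset V) (s : ∀ n, S n) (m : ι) (v : V) : ℕ :=
  #{n ∈ univ.erase m | v ∈ Vert n (s n)}

def potentialWithout (Vert : ∀ m : ι, S m → Finset V) (ϱ : V → ℕ → ℝ) (c : ∀ m : ι, S m → ℝ)
    (m : ι) (s : ∀ n, S n) : ℝ :=
  ∑ v : V, ∑ q ∈ Icc 1 (congestionWithout Vert s m v), ϱ v q - ∑ n ∈ univ.erase m, c n (s n)

omit [Fintype V] in
theorem congestion_eq_congestionWithout_add (Vert : ∀ m : ι, S m → Finset V) (s : ∀ n, S n)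
    (m : ι) (v : V) :
    congestion Vert s v = congestionWithout Vert s m v + if v ∈ Vert m (s m) then 1 else 0 :=
  card_filter_eq_card_filter_erase_add_ite _ (mem_univ m)

omit [Fintype V] in
theorem congestionWithout_update (Vert : ∀ m : ι, S m → Finset V) (s : ∀ n, S n) (m : ι)
    (s' : S m) :
    congestionWithout Vert (Function.update s m s') m = congestionWithout Vert s m := by
  ext v
  refine congrArg card (filter_congr fun n hn => ?_)
  rw [Function.update_of_ne (ne_of_mem_erase hn)]

theorem potentialWithout_update (Vert : ∀ m : ι, S m → Finset V) (ϱ : V → ℕ → ℝ)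
    (c : ∀ m : ι, S m → ℝ) (s : ∀ n, S n) (m : ι) (s' : S m) :
    potentialWithout Vert ϱ c m (Function.update s m s') = potentialWithout Vert ϱ c m s := by
  unfold potentialWithout
  rw [congestionWithout_update]
  congr 1
  exact sum_congr rfl fun n hn => by rw [Function.update_of_ne (ne_of_mem_erase hn)]

theorem potentialV_eq_sum_congestionWithout (Vert : ∀ m : ι, S m → Finset V) (ϱ : V → ℕ → ℝ)
    (s : ∀ n, S n) (m : ι) :
    potentialV Vert ϱ s = ∑ v : V, ∑ q ∈ Icc 1 (congestionWithout Vert s m v), ϱ v q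
      + ∑ v ∈ Vert m (s m), ϱ v (congestionWithout Vert s m v + 1) := by
  simp only [potentialV, congestion_eq_congestionWithout_add Vert s m, sum_Icc_one_add_ite,
    sum_add_distrib, sum_ite_mem, univ_inter]

omit [Fintype V] in
theorem payoffV_eq_sum_congestionWithout (Vert : ∀ m : ι, S m → Finset V) (ϱ : V → ℕ → ℝ)
    (s : ∀ n, S n) (m : ι) :
    payoffV Vert ϱ m s = ∑ v ∈ Vert m (s m), ϱ v (congestionWithout Vert s m v + 1) :=
  sum_congr rfl fun v hv => by rw [congestion_eq_congestionWithout_add Vert s m, if_pos hv]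

theorem potential_sub_payoff_eq_potentialWithout (Vert : ∀ m : ι, S m → Finset V) (ϱ : V → ℕ → ℝ)
    (c : ∀ m : ι, S m → ℝ) (s : ∀ n, S n) (m : ι) :
    potential Vert ϱ c s - payoff Vert ϱ c m s = potentialWithout Vert ϱ c m s := by
  rw [potential, payoff, potentialWithout, potentialV_eq_sum_congestionWithout Vert ϱ s m,
    payoffV_eq_sum_congestionWithout, ← add_sum_erase univ _ (mem_univ m)]
  ring

end WithoutPlayer

/-- The potential `Ψ` is an exact potential for the route selection game: for every
strategy profile `s`, player `m`, and alternative strategy `s'`,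
`Ψ(s'_m, s_{−m}) − Ψ(s) = Ũ_m(s'_m, s_{−m}) − Ũ_m(s)`. -/
theorem exact_potential (Vert : ∀ m : ι, S m → Finset V) (ϱ : V → ℕ → ℝ)
    (c : ∀ m : ι, S m → ℝ) (s : ∀ n, S n) (m : ι) (s' : S m) :
    potential Vert ϱ c (Function.update s m s') - potential Vert ϱ c s =
      payoff Vert ϱ c m (Function.update s m s') - payoff Vert ϱ c m s := by
  have h := potential_sub_payoff_eq_potentialWithout Vert ϱ c (Function.update s m s') m
  rw [potentialWithout_update, ← potential_sub_payoff_eq_potentialWithout Vert ϱ c s m] at h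
  linarith
end

section
/- Vertex-part potential difference (equation (40) of the paper): for every strategy profile s, player m, and alternative strategy s'_m ∈ S_m, writing s' = (s'_m, s_{−m}), Ψ^V(s') − Ψ^V(s) = Σ_{v ∈ Vert(s'_m) \ Vert(s_m)} ϱ_v(z_v(s')) − Σ_{v ∈ Vert(s_m) \ Vert(s'_m)} ϱ_v(z_v(s)), where Ψ^V(s) = Σ_{v ∈ V} Σ_{q=1}^{z_v(s)} ϱ_v(q) is the vertex (reward) part of the potential. -/
open Finset

variable {ι V : Type*} [Fintype ι] [Nonempty ι] [DecidableEq ι] [Fintype V] [DecidableEq V]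
variable {S : ι → Type*} [∀ m, Fintype (S m)] [∀ m, Nonempty (S m)]

/-! Changing player `m`'s strategy changes only `m`'s contribution to each congestion, so `z_v`
rises by one on `Vert(s'_m) \ Vert(s_m)`, drops by one on `Vert(s_m) \ Vert(s'_m)` and is unchanged
elsewhere; accordingly the partial sum `Σ_{q=1}^{z_v} ϱ_v(q)` gains or loses its top term. -/

theorem Finset.card_filter_update_add {ι : Type*} [Fintype ι] [DecidableEq ι] {S : ι → Type*}
    (P : ∀ n, S n → Prop) [∀ n x, Decidable (P n x)] (s : ∀ n, S n) (m : ι) (x : S m) :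
    #{n | P n (Function.update s m x n)} + (if P m (s m) then 1 else 0) =
      #{n | P n (s n)} + (if P m x then 1 else 0) := by
  have card_eq (t : ∀ n, S n) : #{n | P n (t n)} =
      (if P m (t m) then 1 else 0) + ∑ n ∈ univ.erase m, if P n (t n) then 1 else 0 := by
    rw [card_filter, add_sum_erase _ (fun n => if P n (t n) then 1 else 0) (mem_univ m)]
  rw [card_eq, card_eq s, Function.update_self,
    sum_congr rfl fun n hn => by rw [Function.update_of_ne (ne_of_mem_erase hn)]]
  ring

theorem Finset.sum_Icc_one_sub_sum_Icc_one {M : Type*} [AddCommGroup M] (f : ℕ → M) {a b : ℕ}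
    {p q : Prop} [Decidable p] [Decidable q]
    (h : a + (if p then 1 else 0) = b + (if q then 1 else 0)) :
    ∑ k ∈ Icc 1 a, f k - ∑ k ∈ Icc 1 b, f k =
      (if q ∧ ¬p then f a else 0) - (if p ∧ ¬q then f b else 0) := by
  by_cases hp : p <;> by_cases hq : q <;> simp only [hp, hq, if_true, if_false] at h ⊢
  · simp [show a = b by omega]
  · rw [show b = a + 1 by omega, sum_Icc_succ_top (by omega)]; simp
  · rw [show a = b + 1 by omega, sum_Icc_succ_top (by omega)]; simp
  · simp [show a = b by omega]

/-- Vertex-part potential difference (equation (40) of the paper): writing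
`s' = (s'_m, s_{−m})`,
`Ψ^V(s') − Ψ^V(s) = Σ_{v ∈ Vert(s'_m) \ Vert(s_m)} ϱ_v(z_v(s'))
  − Σ_{v ∈ Vert(s_m) \ Vert(s'_m)} ϱ_v(z_v(s))`. -/
theorem potentialV_diff (Vert : ∀ m : ι, S m → Finset V) (ϱ : V → ℕ → ℝ)
    (s : ∀ n, S n) (m : ι) (s' : S m) :
    potentialV Vert ϱ (Function.update s m s') - potentialV Vert ϱ s =
      (∑ v ∈ Vert m s' \ Vert m (s m),
        ϱ v (congestion Vert (Function.update s m s') v)) -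
      ∑ v ∈ Vert m (s m) \ Vert m s', ϱ v (congestion Vert s v) := by
  have congestion_update (v : V) :
      congestion Vert (Function.update s m s') v + (if v ∈ Vert m (s m) then 1 else 0) =
        congestion Vert s v + (if v ∈ Vert m s' then 1 else 0) :=
    card_filter_update_add (fun n x => v ∈ Vert n x) s m s'
  rw [potentialV, potentialV, ← sum_sub_distrib,
    sum_congr rfl fun v _ => sum_Icc_one_sub_sum_Icc_one (ϱ v) (congestion_update v),
    sum_sub_distrib]
  simp only [← mem_sdiff, Fintype.sum_ite_mem]
end

section
/- Any global maximizer of the potential is a pure Nash equilibrium: if a strategy profile s* maximizes Ψ over the (finite, nonempty) set of strategy profiles, then for every player m and every s_m ∈ S_m, Ũ_m(s*) ≥ Ũ_m(s_m, s*_{−m}). Consequently the route selection game possesses a pure strategy Nash equilibrium. -/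
open Finset

variable {ι V : Type*} [Fintype ι] [Nonempty ι] [DecidableEq ι] [Fintype V] [DecidableEq V]
variable {S : ι → Type*} [∀ m, Fintype (S m)] [∀ m, Nonempty (S m)]

/-! `Ψ` is an exact potential: removing player `m` leaves a residual potential that does not
depend on `s_m`, and `Ψ(s)` is that residual plus `Ũ_m(s)`, because the marginal term that `m`
contributes to `Σ_{q=1}^{z_v} ϱ_v(q)` at each of its vertices is exactly `ϱ_v(z_v(s))`. Hence a
unilateral deviation changes `Ψ` and `Ũ_m` by the same amount, so a maximizer of `Ψ`, which
exists since there are finitely many profiles, is a Nash equilibrium. -/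

section

variable {ι V : Type*} [Fintype ι] [DecidableEq ι] [DecidableEq V] {S : ι → Type*}

def congestionExcept (Vert : ∀ m : ι, S m → Finset V) (m : ι) (s : ∀ n, S n) (v : V) : ℕ :=
  ((Finset.univ.erase m).filter fun n => v ∈ Vert n (s n)).card

lemma congestion_eq_congestionExcept_add (Vert : ∀ m : ι, S m → Finset V) (m : ι)
    (s : ∀ n, S n) (v : V) :
    congestion Vert s v = congestionExcept Vert m s v + if v ∈ Vert m (s m) then 1 else 0 := by
  simp only [congestion, congestionExcept, Finset.card_filter]
  exact (Finset.sum_erase_add _ _ (Finset.mem_univ m)).symm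

lemma congestionExcept_update (Vert : ∀ m : ι, S m → Finset V) (m : ι) (s : ∀ n, S n)
    (sm : S m) (v : V) :
    congestionExcept Vert m (Function.update s m sm) v = congestionExcept Vert m s v := by
  refine congrArg Finset.card (Finset.filter_congr fun n hn => ?_)
  rw [Function.update_of_ne (Finset.ne_of_mem_erase hn)]

variable [Fintype V]

def residualPotential (Vert : ∀ m : ι, S m → Finset V) (ϱ : V → ℕ → ℝ) (c : ∀ m : ι, S m → ℝ)
    (m : ι) (s : ∀ n, S n) : ℝ :=
  (∑ v : V, ∑ q ∈ Finset.Icc 1 (congestionExcept Vert m s v), ϱ v q)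
    - ∑ n ∈ Finset.univ.erase m, c n (s n)

lemma residualPotential_update (Vert : ∀ m : ι, S m → Finset V) (ϱ : V → ℕ → ℝ)
    (c : ∀ m : ι, S m → ℝ) (m : ι) (s : ∀ n, S n) (sm : S m) :
    residualPotential Vert ϱ c m (Function.update s m sm) = residualPotential Vert ϱ c m s := by
  unfold residualPotential
  congr 1
  · simp only [congestionExcept_update]
  · refine Finset.sum_congr rfl fun n hn => ?_
    rw [Function.update_of_ne (Finset.ne_of_mem_erase hn)]

lemma potentialV_eq_add_payoffV (Vert : ∀ m : ι, S m → Finset V) (ϱ : V → ℕ → ℝ) (m : ι)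
    (s : ∀ n, S n) :
    potentialV Vert ϱ s =
      (∑ v : V, ∑ q ∈ Finset.Icc 1 (congestionExcept Vert m s v), ϱ v q) + payoffV Vert ϱ m s := by
  have payoffV_eq : payoffV Vert ϱ m s =
      ∑ v : V, if v ∈ Vert m (s m) then ϱ v (congestion Vert s v) else 0 := by
    rw [Finset.sum_ite_mem, Finset.univ_inter]
    rfl
  rw [payoffV_eq, ← Finset.sum_add_distrib]
  refine Finset.sum_congr rfl fun v _ => ?_
  rw [congestion_eq_congestionExcept_add Vert m s v]
  split_ifs
  · exact Finset.sum_Icc_succ_top (Nat.le_add_left 1 _) _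
  · simp

lemma potential_eq_residualPotential_add_payoff (Vert : ∀ m : ι, S m → Finset V)
    (ϱ : V → ℕ → ℝ) (c : ∀ m : ι, S m → ℝ) (m : ι) (s : ∀ n, S n) :
    potential Vert ϱ c s = residualPotential Vert ϱ c m s + payoff Vert ϱ c m s := by
  rw [potential, payoff, residualPotential, potentialV_eq_add_payoffV Vert ϱ m s,
    ← Finset.add_sum_erase _ _ (Finset.mem_univ m)]
  ring

lemma potential_update_sub_potential (Vert : ∀ m : ι, S m → Finset V) (ϱ : V → ℕ → ℝ)
    (c : ∀ m : ι, S m → ℝ) (m : ι) (s : ∀ n, S n) (sm : S m) :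
    potential Vert ϱ c (Function.update s m sm) - potential Vert ϱ c s =
      payoff Vert ϱ c m (Function.update s m sm) - payoff Vert ϱ c m s := by
  rw [potential_eq_residualPotential_add_payoff Vert ϱ c m,
    potential_eq_residualPotential_add_payoff Vert ϱ c m s, residualPotential_update]
  ring

end

/-- Any global maximizer of the potential `Ψ` is a pure Nash equilibrium; consequently
the route selection game possesses a pure strategy Nash equilibrium. -/
theorem potential_maximizer_is_NE (Vert : ∀ m : ι, S m → Finset V)
    (ϱ : V → ℕ → ℝ) (c : ∀ m : ι, S m → ℝ) :
    (∀ sStar : ∀ n, S n, (∀ s : ∀ n, S n, potential Vert ϱ c s ≤ potential Vert ϱ c sStar) →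
      ∀ (m : ι) (sm : S m),
        payoff Vert ϱ c m (Function.update sStar m sm) ≤ payoff Vert ϱ c m sStar) ∧
    (∃ sStar : ∀ n, S n, ∀ (m : ι) (sm : S m),
        payoff Vert ϱ c m (Function.update sStar m sm) ≤ payoff Vert ϱ c m sStar) := by
  have maximizer_isNE : ∀ sStar : ∀ n, S n,
      (∀ s : ∀ n, S n, potential Vert ϱ c s ≤ potential Vert ϱ c sStar) →
      ∀ (m : ι) (sm : S m),
        payoff Vert ϱ c m (Function.update sStar m sm) ≤ payoff Vert ϱ c m sStar := by
    intro sStar hmax m sm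
    have := potential_update_sub_potential Vert ϱ c m sStar sm
    linarith [hmax (Function.update sStar m sm)]
  obtain ⟨sStar, hmax⟩ := Finite.exists_max (potential Vert ϱ c)
  exact ⟨maximizer_isNE, sStar, maximizer_isNE sStar hmax⟩
end
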